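/- arXiv:1606.08872 — 2 statements merged into one kernel-verified Lean document; each statement's English description precedes it below -/
import Mathlib

section
/- Let 1 ≤ i ≤ j ≤ r, and for each i ≤ t ≤ j let k_t be an integer with 1 ≤ k_t ≤ t + 1; let π_{k_t} denote the cycle with ambient index t, and suppose the sequence k_i < k_{i+1} < ⋯ < k_j is strictly increasing. Then for every l with k_j < l ≤ j, one has π_{k_i} π_{k_{i+1}} ⋯ π_{k_j}(α_l) = α_{l + i − j − 1}. -/
open Equiv Finset

/-- The simple reflection `s i = (i, i+1)` (1-based) in `S_{r+1}`, for `1 ≤ i ≤ r`;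
the junk value `1` otherwise. -/
def sr (r i : ℕ) : Equiv.Perm (Fin (r + 1)) :=
  if h : 1 ≤ i ∧ i ≤ r then Equiv.swap ⟨i - 1, by omega⟩ ⟨i, by omega⟩ else 1

/-- The cycle `π_k` with ambient index `i`, i.e. `s_i s_{i-1} ⋯ s_k`
(the identity when `k = i + 1`). -/
def cyc (r i k : ℕ) : Equiv.Perm (Fin (r + 1)) :=
  ((List.range (i + 1 - k)).map fun t => sr r (i - t)).prod

/-- The product `π_{k i} π_{k (i+1)} ⋯ π_{k j}`, the factor `π_{k t}` being the
cycle with ambient index `t`. -/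
def cycProd (r : ℕ) (k : ℕ → ℕ) (i j : ℕ) : Equiv.Perm (Fin (r + 1)) :=
  ((List.range' i (j + 1 - i)).map fun t => cyc r t (k t)).prod

/-- Coxeter length of a permutation: the number of inversions. -/
def lenInv {n : ℕ} (w : Equiv.Perm (Fin n)) : ℕ :=
  (Finset.univ.filter fun p : Fin n × Fin n => p.1 < p.2 ∧ w p.2 < w p.1).card

/-- Partial sums of a (1-based) composition: `psum c j = c 1 + ⋯ + c j`. -/
def psum (c : ℕ → ℕ) (j : ℕ) : ℕ := ∑ i ∈ Finset.Icc 1 j, c i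

/-- The transpose partition of `(t 1, …, t b)`: `transp b t j = #{i ∈ [1,b] : t i ≥ j}`. -/
def transp (b : ℕ) (t : ℕ → ℕ) (j : ℕ) : ℕ :=
  ((Finset.Icc 1 b).filter fun i => j ≤ t i).card

/-- The element of `Fin (r+1)` with value `i` (for `i ≤ r`). -/
def finOf (r i : ℕ) : Fin (r + 1) := ⟨min i r, by omega⟩

/-- `w(α_i)` is a positive root, where `α_i = e_i − e_{i+1}` (1-based), i.e. the
0-based pair `(i-1, i)`; `w(e_c − e_d) = e_{w c} − e_{w d}` is positive iff `w c < w d`. -/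
def posRoot (r : ℕ) (w : Equiv.Perm (Fin (r + 1))) (i : ℕ) : Prop :=
  (w (finOf r (i - 1)) : ℕ) < w (finOf r i)

/-- `w(α_i)` is a negative root. -/
def negRoot (r : ℕ) (w : Equiv.Perm (Fin (r + 1))) (i : ℕ) : Prop :=
  (w (finOf r i) : ℕ) < w (finOf r (i - 1))

/-- `w(α_i)` is a simple root. -/
def simpleRoot (r : ℕ) (w : Equiv.Perm (Fin (r + 1))) (i : ℕ) : Prop :=
  (w (finOf r i) : ℕ) = (w (finOf r (i - 1)) : ℕ) + 1

/-- `w(α_i) = α_j` (as roots: the image pair is `(j-1, j)` in 0-based indices). -/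
def eqRoot (r : ℕ) (w : Equiv.Perm (Fin (r + 1))) (i j : ℕ) : Prop :=
  (w (finOf r (i - 1)) : ℕ) = j - 1 ∧ (w (finOf r i) : ℕ) = j

/-- `Π_l Π_{l+1} ⋯ Π_a` for the composition `c` and tuple `k`, where
`Π_j = π_{k_{x_{j-1}}} ⋯ π_{k_{x_j - 1}}` and `x_j = psum c j`. -/
def tailProd (r a : ℕ) (c k : ℕ → ℕ) (l : ℕ) : Equiv.Perm (Fin (r + 1)) :=
  ((List.range' l (a + 1 - l)).map fun j => cycProd r k (psum c (j - 1)) (psum c j - 1)).prod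

/-- The subgroup `W(P)`: generated by the simple reflections `s i` with `i ∈ [1,r]`
avoiding the partial sums `x 1, …, x (a-1)` of the composition `c`. -/
def WP (r a : ℕ) (c : ℕ → ℕ) : Subgroup (Equiv.Perm (Fin (r + 1))) :=
  Subgroup.closure
    {g | ∃ i, 1 ≤ i ∧ i ≤ r ∧ (∀ j, 1 ≤ j → j ≤ a - 1 → i ≠ psum c j) ∧ g = sr r i}

/-- `α_i ∈ Δ_λ` for the composition `λ = (p 1, …, p m)` of `r+1`. -/
def inDelta (r m : ℕ) (p : ℕ → ℕ) (i : ℕ) : Prop :=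
  1 ≤ i ∧ i ≤ r ∧ ∀ j, 1 ≤ j → j ≤ m - 1 → i ≠ psum p j

/-- The left coset `H · g`. -/
def cosetOf {G : Type*} [Group G] (H : Subgroup G) (g : G) : Set G :=
  {x | ∃ h ∈ H, x = h * g}

/-- The (0-based) positions `u` and `v` lie in the same block of the composition
`μ^⊤ = transp b t`; a negative root `e_c − e_d` lies in `Φ⁻_{μ^⊤}` iff its two
indices lie in the same block. -/
def sameBlock (b : ℕ) (t : ℕ → ℕ) (u v : ℕ) : Prop :=
  ∃ j, 1 ≤ j ∧ j ≤ t 1 ∧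
    psum (transp b t) (j - 1) ≤ u ∧ u < psum (transp b t) j ∧
    psum (transp b t) (j - 1) ≤ v ∧ v < psum (transp b t) j

/-!
Read on positions `0, …, r`, the cycle `π_k` with ambient index `t` moves every position `x`
with `k ≤ x ≤ t` down by one: the first reflection `s_x` it applies to `x` sends it to `x - 1`,
and the later ones `s_{x+1}, …, s_t` do not touch `x - 1`. Strict monotonicity of the `k_t` gives
`k_t + (j - t) ≤ k_j < l`, so the positions `l - 1` and `l` stay inside the moving range of every
factor of `π_{k_i} ⋯ π_{k_j}`, and are each moved down by `j - i + 1`.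
-/

section

variable {r : ℕ}

lemma val_finOf {m : ℕ} (hm : m ≤ r) : (finOf r m : ℕ) = m := by
  simp [finOf, hm]

lemma sr_apply_of_ne {m : ℕ} {x : Fin (r + 1)} (hm1 : (x : ℕ) ≠ m - 1) (hm : (x : ℕ) ≠ m) :
    sr r m x = x := by
  unfold sr
  split
  · exact swap_apply_of_ne_of_ne (Fin.ne_of_val_ne hm1) (Fin.ne_of_val_ne hm)
  · rfl

lemma val_sr_apply_self {m : ℕ} (h1 : 1 ≤ m) (h2 : m ≤ r) :
    (sr r m ⟨m, by omega⟩ : ℕ) = m - 1 := by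
  rw [sr, dif_pos ⟨h1, h2⟩, swap_apply_right]

lemma cyc_of_lt {t k : ℕ} (h : t < k) : cyc r t k = 1 := by
  rw [cyc, Nat.sub_eq_zero_of_le (by omega), List.range_zero, List.map_nil, List.prod_nil]

lemma cyc_eq_sr_mul {t k : ℕ} (hk : 1 ≤ k) (hkt : k ≤ t) :
    cyc r t k = sr r t * cyc r (t - 1) k := by
  rw [cyc, cyc, show t + 1 - k = t - k + 1 by omega, show t - 1 + 1 - k = t - k by omega,
    List.range_succ_eq_map, List.map_cons, List.prod_cons, List.map_map, Nat.sub_zero]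
  congr 3
  funext s
  simp only [Function.comp, Nat.succ_eq_add_one]
  congr 1
  omega

lemma cyc_apply_of_lt {t k : ℕ} (hk : 1 ≤ k) {x : Fin (r + 1)} (hx : t < x) : cyc r t k x = x := by
  induction t with
  | zero => rw [cyc_of_lt (by omega)]; rfl
  | succ t ih =>
    by_cases hkt : k ≤ t + 1
    · rw [cyc_eq_sr_mul hk hkt, Perm.mul_apply, Nat.add_sub_cancel, ih (by omega)]
      exact sr_apply_of_ne (by omega) (by omega)
    · rw [cyc_of_lt (by omega)]; rfl

lemma val_cyc_apply {t k : ℕ} (hk : 1 ≤ k) (ht : t ≤ r) {x : Fin (r + 1)}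
    (hkx : k ≤ x) (hxt : (x : ℕ) ≤ t) : (cyc r t k x : ℕ) = x - 1 := by
  induction t with
  | zero => omega
  | succ t ih =>
    rw [cyc_eq_sr_mul hk (by omega), Perm.mul_apply, Nat.add_sub_cancel]
    rcases Nat.lt_or_ge t x with hx | hx
    · have hx' : x = ⟨t + 1, by omega⟩ := Fin.ext (show (x : ℕ) = t + 1 by omega)
      rw [cyc_apply_of_lt hk hx, hx', val_sr_apply_self (by omega) ht]
    · have hy := ih (by omega) hx
      rw [sr_apply_of_ne (by omega) (by omega), hy]

lemma cycProd_of_lt (k : ℕ → ℕ) {i j : ℕ} (h : j < i) : cycProd r k i j = 1 := by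
  rw [cycProd, Nat.sub_eq_zero_of_le h, List.range'_zero, List.map_nil, List.prod_nil]

lemma cycProd_succ (k : ℕ → ℕ) {i j : ℕ} (h : i ≤ j + 1) :
    cycProd r k i (j + 1) = cycProd r k i j * cyc r (j + 1) (k (j + 1)) := by
  rw [cycProd, cycProd, show j + 1 + 1 - i = j + 1 - i + 1 by omega, List.range'_concat,
    List.map_append, List.prod_append, List.map_singleton, List.prod_singleton, one_mul,
    Nat.add_sub_cancel' h]

-- When `π_{k_t}` is reached, `x` has already been moved down by `j - t`.
lemma val_cycProd_apply (k : ℕ → ℕ) {i j : ℕ} (hjr : j ≤ r) {x : Fin (r + 1)} (hxj : (x : ℕ) ≤ j)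
    (hk : ∀ t, i ≤ t → t ≤ j → 1 ≤ k t ∧ k t + (j - t) ≤ x) :
    (cycProd r k i j x : ℕ) + (j + 1 - i) = x := by
  rcases Nat.lt_or_ge j i with hji | hij
  · rw [cycProd_of_lt k hji, Nat.sub_eq_zero_of_le hji]
    rfl
  induction j generalizing x with
  | zero =>
    have := hk 0 hij le_rfl
    omega
  | succ j ih =>
    have hkj := hk (j + 1) hij le_rfl
    have hy := val_cyc_apply (x := x) hkj.1 hjr (by omega) hxj
    rw [cycProd_succ k (by omega), Perm.mul_apply]
    rcases Nat.lt_or_ge j i with hji | hij'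
    · rw [cycProd_of_lt k hji]
      simp only [Perm.one_apply]
      omega
    have := ih (by omega) (x := cyc r (j + 1) (k (j + 1)) x) (by omega)
      (fun t hit htj => ⟨(hk t hit (by omega)).1, by have := hk t hit (by omega); omega⟩) hij'
    omega

end

lemma add_sub_le_of_lt_succ {k : ℕ → ℕ} {i j : ℕ} (hinc : ∀ t, i ≤ t → t < j → k t < k (t + 1))
    {t : ℕ} (hit : i ≤ t) (htj : t ≤ j) : k t + (j - t) ≤ k j := by
  induction j, htj using Nat.le_induction with
  | base => simp
  | succ j htj ih =>
    have := ih fun s his hsj => hinc s his (by omega)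
    have := hinc j (by omega) (by omega)
    omega

theorem stmt12_general (r i j l : ℕ) (hij : i ≤ j) (hjr : j ≤ r) (k : ℕ → ℕ)
    (hk : ∀ t, i ≤ t → t ≤ j → 1 ≤ k t ∧ k t ≤ t + 1)
    (hinc : ∀ t, i ≤ t → t < j → k t < k (t + 1))
    (hl1 : k j < l) (hl2 : l ≤ j) :
    eqRoot r (cycProd r k i j) l (l + i - j - 1) := by
  have shift : ∀ x, l - 1 ≤ x → x ≤ j → (cycProd r k i j (finOf r x) : ℕ) + (j + 1 - i) = x := by
    intro x hlx hxj
    have hx := val_finOf (r := r) (hxj.trans hjr)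
    have := val_cycProd_apply k hjr (x := finOf r x) (by omega) fun t hit htj =>
      ⟨(hk t hit htj).1, by have := add_sub_le_of_lt_succ hinc hit htj; omega⟩
    rwa [hx] at this
  have hlo := shift (l - 1) le_rfl (by omega)
  have hhi := shift l (by omega) hl2
  constructor <;> omega

/-- if `k_i < k_{i+1} < ⋯ < k_j` then for `k_j < l ≤ j`,
`π_{k_i} ⋯ π_{k_j}(α_l) = α_{l + i − j − 1}`. -/
theorem stmt12 (r i j l : ℕ) (hi : 1 ≤ i) (hij : i ≤ j) (hjr : j ≤ r) (k : ℕ → ℕ)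
    (hk : ∀ t, i ≤ t → t ≤ j → 1 ≤ k t ∧ k t ≤ t + 1)
    (hinc : ∀ t, i ≤ t → t < j → k t < k (t + 1))
    (hl1 : k j < l) (hl2 : l ≤ j) :
    eqRoot r (cycProd r k i j) l (l + i - j - 1) :=
  stmt12_general r i j l hij hjr k hk hinc hl1 hl2
end

section
/- Let (r_1, …, r_a) be a composition of r+1 with a ≥ 2, let (k_{x_1}, …, k_r) ∈ D_{(r_1⋯r_a)}, and set w = Π_2 Π_3 ⋯ Π_a. Let 1 ≤ m ≤ n ≤ r. Then at least one of the following holds: (1) w(α_t) is a positive root for some m ≤ t ≤ n; (2) there exists an integer c ≥ 1 such that Π_a(α_{m+t}) = α_{c+t} for all 0 ≤ t ≤ n − m; (3) w(α_m) is a negative root and there exists an integer c ≥ 1 such that Π_a(α_{m+1+t}) = α_{c+t} for all 0 ≤ t ≤ n − m − 1 (this last condition being vacuous when n = m). -/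
open Equiv Finset

/-!
Write `x = x_{a-1}`. The product `Π_a = π_{k_x} ⋯ π_{k_r}` is a shuffle: it sends the position
`k_i - 1` (0-based) to `i`, increasingly onto the top block `x, …, r`, and all other positions
increasingly and without gaps onto `0, …, x - 1`. The prefix `Π_2 ⋯ Π_{a-1}` only involves
`s_1, …, s_{x-1}`, so it fixes the top block and permutes the bottom one. Hence if some
`t ∈ [m, n]` is sent to the top block, `w(α_t)` is positive; otherwise `Π_a` maps a run of
consecutive bottom positions to consecutive values, and whether `m - 1` goes to the top or to the
bottom block decides between alternatives (3) and (2).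
-/

lemma Equiv.Perm.list_prod_apply_eq_self {α : Type*} {l : List (Equiv.Perm α)} {v : α}
    (h : ∀ g ∈ l, g v = v) : l.prod v = v :=
  List.prod_induction (fun g : Equiv.Perm α => g v = v)
    (fun g g' hg hg' => by rw [Equiv.Perm.mul_apply, hg', hg]) rfl h

lemma Equiv.Perm.apply_lt_of_forall_le_apply_eq_self {n x : ℕ} {u : Equiv.Perm (Fin n)}
    (hu : ∀ v : Fin n, x ≤ v → u v = v) {v : Fin n} (hv : (v : ℕ) < x) :
    (u v : ℕ) < x := by
  by_contra h
  rw [u.injective (hu _ (not_lt.mp h))] at h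
  exact h hv

lemma eq_add_of_forall_succ {f : ℕ → ℕ} {p q : ℕ}
    (h : ∀ v, p ≤ v → v < q → f (v + 1) = f v + 1)
    (s : ℕ) (hs : p + s ≤ q) : f (p + s) = f p + s := by
  induction s with
  | zero => rfl
  | succ s ih => rw [← add_assoc, h _ (by omega) (by omega), ih (by omega), add_assoc]

lemma finOf_val {r i : ℕ} (h : i ≤ r) : (finOf r i : ℕ) = i := by
  simp [finOf, h]

lemma sr_apply_val {r s : ℕ} (h1 : 1 ≤ s) (h2 : s ≤ r) (v : Fin (r + 1)) :
    (sr r s v : ℕ) = if (v : ℕ) = s - 1 then s else if (v : ℕ) = s then s - 1 else v := by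
  rw [sr, dif_pos ⟨h1, h2⟩, Equiv.swap_apply_def]
  split_ifs <;> simp only [Fin.ext_iff] at * <;> omega

lemma sr_apply_eq_self {r s : ℕ} {v : Fin (r + 1)} (h : (v : ℕ) + 1 < s ∨ s < v) :
    sr r s v = v := by
  unfold sr
  split
  · exact Equiv.swap_apply_of_ne_of_ne (by simp only [ne_eq, Fin.ext_iff]; omega)
      (by simp only [ne_eq, Fin.ext_iff]; omega)
  · rfl

lemma cyc_apply_eq_self {r i k : ℕ} {v : Fin (r + 1)} (h : (v : ℕ) + 1 < k ∨ i < v) :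
    cyc r i k v = v := by
  refine Equiv.Perm.list_prod_apply_eq_self ?_
  simp only [List.mem_map, List.mem_range]
  rintro _ ⟨t, ht, rfl⟩
  exact sr_apply_eq_self (by omega)

lemma cycProd_apply_eq_self {r b e : ℕ} {k : ℕ → ℕ} {v : Fin (r + 1)}
    (h : ∀ t, b ≤ t → t ≤ e → (v : ℕ) + 1 < k t ∨ t < v) : cycProd r k b e v = v := by
  refine Equiv.Perm.list_prod_apply_eq_self ?_
  simp only [List.mem_map, List.mem_range'_1]
  rintro _ ⟨t, ht, rfl⟩
  exact cyc_apply_eq_self (h t ht.1 (by omega))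

lemma cyc_succ {r i k : ℕ} (h : k ≤ i) : cyc r i k = cyc r i (k + 1) * sr r k := by
  unfold cyc
  rw [show i + 1 - k = (i - k) + 1 by omega, List.range_succ, List.map_append, List.prod_append]
  simp [show i - (i - k) = k by omega, show i + 1 - (k + 1) = i - k by omega]

lemma cyc_apply_val {r i k : ℕ} (hi : i ≤ r) (hk : 1 ≤ k) (hki : k ≤ i + 1)
    (v : Fin (r + 1)) :
    (cyc r i k v : ℕ) =
      if (v : ℕ) + 1 = k then i else if k ≤ v ∧ v ≤ i then v - 1 else v := by
  induction hki using Nat.decreasingInduction generalizing v with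
  | self =>
    rw [show cyc r i (i + 1) = 1 by simp [cyc], Equiv.Perm.one_apply]
    split_ifs <;> omega
  | of_succ k hk' ih =>
    rw [cyc_succ (by omega), Equiv.Perm.mul_apply, ih (by omega), sr_apply_val hk (by omega)]
    split_ifs <;> omega

lemma cycProd_eq_cyc_mul {r b : ℕ} (k : ℕ → ℕ) (hb : b ≤ r) :
    cycProd r k b r = cyc r b (k b) * cycProd r k (b + 1) r := by
  unfold cycProd
  rw [show r + 1 - b = (r - b) + 1 by omega, List.range'_succ, List.map_cons, List.prod_cons,
    show r + 1 - (b + 1) = r - b by omega]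

lemma cycProd_succ_self (r : ℕ) (k : ℕ → ℕ) : cycProd r k (r + 1) r = 1 := by
  simp [cycProd]

section Shuffle

variable {r b : ℕ} {k : ℕ → ℕ}

lemma cycProd_apply_of_eq (hk : ∀ t, b ≤ t → t ≤ r → 1 ≤ k t ∧ k t ≤ t + 1)
    (hmono : StrictMonoOn k (Set.Icc b r)) {i : ℕ} (hbi : b ≤ i) (hir : i ≤ r)
    {v : Fin (r + 1)} (hv : k i = v + 1) : (cycProd r k b r v : ℕ) = i := by
  induction hbi using Nat.decreasingInduction with
  | self =>
    have hfix : cycProd r k (i + 1) r v = v := cycProd_apply_eq_self fun t ht htr =>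
      Or.inl (hv ▸ hmono ⟨le_rfl, hir⟩ ⟨by omega, htr⟩ (by omega))
    rw [cycProd_eq_cyc_mul k hir, Equiv.Perm.mul_apply, hfix,
      cyc_apply_val hir (hk i le_rfl hir).1 (hk i le_rfl hir).2, if_pos hv.symm]
  | of_succ b hb ih =>
    have hv' := ih (fun t h1 h2 => hk t (by omega) h2)
      (hmono.mono (Set.Icc_subset_Icc_left (by omega)))
    rw [cycProd_eq_cyc_mul k (by omega), Equiv.Perm.mul_apply, cyc_apply_eq_self (by omega), hv']

lemma eq_of_cycProd_succ_apply_eq (hk : ∀ t, b ≤ t → t ≤ r → 1 ≤ k t ∧ k t ≤ t + 1)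
    (hmono : StrictMonoOn k (Set.Icc b r)) (hbr : b ≤ r) {v : Fin (r + 1)}
    (hv : (cycProd r k (b + 1) r v : ℕ) = k b - 1) : (v : ℕ) + 1 = k b := by
  have hkb := hk b le_rfl hbr
  set e : Fin (r + 1) := ⟨k b - 1, by omega⟩
  have hfix : cycProd r k (b + 1) r e = e := cycProd_apply_eq_self fun t ht htr =>
    Or.inl (by
      simpa [e, Nat.sub_add_cancel hkb.1] using hmono ⟨le_rfl, hbr⟩ ⟨by omega, htr⟩ ht)
  have hve : v = e := (cycProd r k (b + 1) r).injective (by rw [hfix]; exact Fin.ext hv)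
  rw [hve]
  exact Nat.sub_add_cancel hkb.1

lemma cycProd_apply_lt (hk : ∀ t, b ≤ t → t ≤ r → 1 ≤ k t ∧ k t ≤ t + 1)
    (hmono : StrictMonoOn k (Set.Icc b r)) (hb : b ≤ r + 1) {v : Fin (r + 1)}
    (hv : (v : ℕ) + 1 ∉ k '' Set.Icc b r) : (cycProd r k b r v : ℕ) < b := by
  induction hb using Nat.decreasingInduction with
  | self => simpa [cycProd_succ_self] using v.isLt
  | of_succ b hb ih =>
    have hk' := hk b le_rfl (by omega)
    have hvb : (v : ℕ) + 1 ≠ k b := fun h => hv ⟨b, ⟨le_rfl, by omega⟩, h.symm⟩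
    have hsub : Set.Icc (b + 1) r ⊆ Set.Icc b r := Set.Icc_subset_Icc_left (Nat.le_succ b)
    have hg := ih (fun t h1 h2 => hk t (by omega) h2) (hmono.mono hsub)
      (fun h => hv (Set.image_mono hsub h))
    have hne := mt (eq_of_cycProd_succ_apply_eq hk hmono (by omega)) hvb
    rw [cycProd_eq_cyc_mul k (by omega), Equiv.Perm.mul_apply, cyc_apply_val (by omega) hk'.1 hk'.2]
    split_ifs <;> omega

lemma cycProd_apply_succ (hk : ∀ t, b ≤ t → t ≤ r → 1 ≤ k t ∧ k t ≤ t + 1)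
    (hmono : StrictMonoOn k (Set.Icc b r)) (hb : b ≤ r + 1) {v w : Fin (r + 1)}
    (hvw : (w : ℕ) = v + 1) (hv : (v : ℕ) + 1 ∉ k '' Set.Icc b r)
    (hw : (w : ℕ) + 1 ∉ k '' Set.Icc b r) :
    (cycProd r k b r w : ℕ) = cycProd r k b r v + 1 := by
  induction hb using Nat.decreasingInduction with
  | self => simp [cycProd_succ_self, hvw]
  | of_succ b hb ih =>
    have hk' := hk b le_rfl (by omega)
    have hk'' : ∀ t, b + 1 ≤ t → t ≤ r → 1 ≤ k t ∧ k t ≤ t + 1 :=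
      fun t h1 h2 => hk t (by omega) h2
    have hsub : Set.Icc (b + 1) r ⊆ Set.Icc b r := Set.Icc_subset_Icc_left (Nat.le_succ b)
    have hmono' := hmono.mono hsub
    have himage := Set.image_mono (f := k) hsub
    have hvb : (v : ℕ) + 1 ≠ k b := fun h => hv ⟨b, ⟨le_rfl, by omega⟩, h.symm⟩
    have hwb : (w : ℕ) + 1 ≠ k b := fun h => hw ⟨b, ⟨le_rfl, by omega⟩, h.symm⟩
    have hg := ih hk'' hmono' (fun h => hv (himage h)) (fun h => hw (himage h))
    have hlt := cycProd_apply_lt hk'' hmono' hb (fun h => hw (himage h))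
    have hvne := mt (eq_of_cycProd_succ_apply_eq hk hmono (by omega)) hvb
    have hwne := mt (eq_of_cycProd_succ_apply_eq hk hmono (by omega)) hwb
    rw [cycProd_eq_cyc_mul k (by omega), Equiv.Perm.mul_apply, Equiv.Perm.mul_apply,
      cyc_apply_val (by omega) hk'.1 hk'.2, cyc_apply_val (by omega) hk'.1 hk'.2]
    split_ifs <;> omega

end Shuffle

lemma psum_succ (c : ℕ → ℕ) (j : ℕ) : psum c (j + 1) = psum c j + c (j + 1) :=
  Finset.sum_Icc_succ_top (by omega) c

lemma psum_mono (c : ℕ → ℕ) : Monotone (psum c) := fun _ _ h =>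
  Finset.sum_le_sum_of_subset (Finset.Icc_subset_Icc_right h)

lemma tailProd_self (r a : ℕ) (c k : ℕ → ℕ) :
    tailProd r a c k a = cycProd r k (psum c (a - 1)) (psum c a - 1) := by
  simp [tailProd]

lemma tailProd_two_eq_mul {r a : ℕ} (c k : ℕ → ℕ) (ha : 2 ≤ a) (hc : 1 ≤ c 1) :
    ∃ u : Equiv.Perm (Fin (r + 1)), (∀ v : Fin (r + 1), psum c (a - 1) ≤ v → u v = v) ∧
      tailProd r a c k 2 = u * tailProd r a c k a := by
  refine ⟨((List.range' 2 (a - 2)).map fun j => cycProd r k (psum c (j - 1)) (psum c j - 1)).prod,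
    fun v hv => ?_, ?_⟩
  · have h1 : 1 ≤ psum c (a - 1) := by
      simpa [psum] using hc.trans (psum_mono c (show 1 ≤ a - 1 by omega))
    refine Equiv.Perm.list_prod_apply_eq_self ?_
    simp only [List.mem_map, List.mem_range'_1]
    rintro _ ⟨j, hj, rfl⟩
    have := psum_mono c (show j ≤ a - 1 by omega)
    exact cycProd_apply_eq_self fun t _ ht => Or.inr (by omega)
  · rw [tailProd_self]
    unfold tailProd
    rw [show a + 1 - 2 = (a - 2) + 1 by omega, List.range'_concat, List.map_append,
      List.prod_append, show 2 + 1 * (a - 2) = a by omega]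
    simp

theorem trichotomy_of_shuffle {r x m n : ℕ} (T : ℕ → Prop) {u P : Equiv.Perm (Fin (r + 1))}
    (hu : ∀ v : Fin (r + 1), x ≤ v → u v = v)
    (hT : ∀ v : Fin (r + 1), T v → x ≤ P v)
    (hTc : ∀ v : Fin (r + 1), ¬T v → (P v : ℕ) < x)
    (hsucc : ∀ v w : Fin (r + 1), (w : ℕ) = v + 1 → ¬T v → ¬T w → (P w : ℕ) = P v + 1)
    (hmono : ∀ v w : Fin (r + 1), v < w → T v → T w → P v < P w)
    (hm : 1 ≤ m) (hmn : m ≤ n) (hn : n ≤ r) :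
    (∃ t, m ≤ t ∧ t ≤ n ∧ posRoot r (u * P) t) ∨
    (∃ cc, 1 ≤ cc ∧ ∀ s, s ≤ n - m → eqRoot r P (m + s) (cc + s)) ∨
    (negRoot r (u * P) m ∧
      ∃ cc, 1 ≤ cc ∧ ∀ s, m + 1 + s ≤ n → eqRoot r P (m + 1 + s) (cc + s)) := by
  set p : ℕ → ℕ := fun t => P (finOf r t)
  have hrun : ∀ q, (∀ t, q ≤ t → t ≤ n → ¬T t) →
      ∀ s, q + s ≤ n → p (q + s) = p q + s :=
    fun q hq => eq_add_of_forall_succ fun v h1 h2 => hsucc _ _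
      (by simp only [finOf_val (show v ≤ r by omega), finOf_val (show v + 1 ≤ r by omega)])
      (by rw [finOf_val (by omega)]; exact hq v h1 h2.le)
      (by rw [finOf_val (by omega)]; exact hq (v + 1) (by omega) h2)
  have hTf : ∀ t ≤ r, T t → x ≤ p t := fun t ht h => hT _ (by rwa [finOf_val ht])
  have hTcf : ∀ t ≤ r, ¬T t → p t < x := fun t ht h => hTc _ (by rwa [finOf_val ht])
  have huc : ∀ t ≤ r, ¬T t → (u (P (finOf r t)) : ℕ) < x := fun t ht h =>
    Equiv.Perm.apply_lt_of_forall_le_apply_eq_self hu (hTcf t ht h)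
  by_cases hA : ∃ t, m ≤ t ∧ t ≤ n ∧ T t
  · obtain ⟨t, hmt, htn, ht⟩ := hA
    refine Or.inl ⟨t, hmt, htn, ?_⟩
    unfold posRoot
    rw [Equiv.Perm.mul_apply, Equiv.Perm.mul_apply, hu _ (hTf t (by omega) ht)]
    by_cases ht' : T (t - 1)
    · rw [hu _ (hTf _ (by omega) ht')]
      refine hmono _ _ ?_ (by rwa [finOf_val (by omega)]) (by rwa [finOf_val (by omega)])
      simp only [Fin.lt_def, finOf_val (show t ≤ r by omega),
        finOf_val (show t - 1 ≤ r by omega)]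
      omega
    · exact (huc _ (by omega) ht').trans_le (hTf t (by omega) ht)
  push Not at hA
  have hroots : ∀ q, (∀ t, q ≤ t → t ≤ n → ¬T t) →
      ∀ s, q + 1 + s ≤ n → eqRoot r P (q + 1 + s) (p q + 1 + s) := fun q hq s hs => by
    show p (q + 1 + s - 1) = p q + 1 + s - 1 ∧ p (q + 1 + s) = p q + 1 + s
    rw [show q + 1 + s - 1 = q + s by omega, show q + 1 + s = q + (s + 1) by omega,
      hrun q hq s (by omega), hrun q hq (s + 1) (by omega)]
    omega
  by_cases hm1 : T (m - 1)
  · refine Or.inr (Or.inr ⟨?_, p m + 1, by omega, hroots m hA⟩)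
    unfold negRoot
    rw [Equiv.Perm.mul_apply, Equiv.Perm.mul_apply, hu _ (hTf _ (by omega) hm1)]
    exact (huc m (by omega) (hA m le_rfl hmn)).trans_le (hTf _ (by omega) hm1)
  · have hA' : ∀ t, m - 1 ≤ t → t ≤ n → ¬T t := fun t h1 h2 => by
      rcases Nat.eq_or_lt_of_le h1 with rfl | h1
      · exact hm1
      · exact hA t (by omega) h2
    refine Or.inr (Or.inl ⟨p (m - 1) + 1, by omega, fun s hs => ?_⟩)
    simpa only [show m - 1 + 1 + s = m + s by omega] using hroots (m - 1) hA' s (by omega)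

theorem stmt13_general (r a m n : ℕ) (ha : 2 ≤ a) (c k : ℕ → ℕ)
    (hc : ∀ j, 1 ≤ j → j ≤ a → 1 ≤ c j) (hcsum : psum c a = r + 1)
    (hka : ∀ i, psum c 1 ≤ i → i ≤ r → 1 ≤ k i ∧ k i ≤ i + 1)
    (hkb : ∀ j, 2 ≤ j → j ≤ a → ∀ i, psum c (j - 1) ≤ i → i + 1 ≤ psum c j - 1 →
      k i < k (i + 1))
    (hm : 1 ≤ m) (hmn : m ≤ n) (hn : n ≤ r) :
    (∃ t, m ≤ t ∧ t ≤ n ∧ posRoot r (tailProd r a c k 2) t) ∨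
    (∃ cc, 1 ≤ cc ∧ ∀ s, s ≤ n - m → eqRoot r (tailProd r a c k a) (m + s) (cc + s)) ∨
    (negRoot r (tailProd r a c k 2) m ∧
      ∃ cc, 1 ≤ cc ∧ ∀ s, m + 1 + s ≤ n →
        eqRoot r (tailProd r a c k a) (m + 1 + s) (cc + s)) := by
  set x := psum c (a - 1)
  have hxa : psum c a = x + c a := by
    simpa [Nat.sub_add_cancel (by omega : 1 ≤ a)] using psum_succ c (a - 1)
  have h1x : psum c 1 ≤ x := psum_mono c (by omega)
  have hxr : x ≤ r := by have := hc a (by omega) le_rfl; omega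
  have hk : ∀ t, x ≤ t → t ≤ r → 1 ≤ k t ∧ k t ≤ t + 1 :=
    fun t h1 h2 => hka t (h1x.trans h1) h2
  have hmono : StrictMonoOn k (Set.Icc x r) := strictMonoOn_of_lt_add_one Set.ordConnected_Icc
    fun t _ ht ht' => hkb a ha le_rfl t ht.1 (by simp only [Set.mem_Icc] at ht'; omega)
  have hP : tailProd r a c k a = cycProd r k x r := by
    rw [tailProd_self, show psum c a - 1 = r by omega]
  obtain ⟨u, hu, hw⟩ := tailProd_two_eq_mul (r := r) c k ha (hc 1 le_rfl (by omega))
  rw [hw, hP]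
  refine trichotomy_of_shuffle (fun v => v + 1 ∈ k '' Set.Icc x r) hu ?_
    (fun v hv => cycProd_apply_lt hk hmono (by omega) hv)
    (fun v w hvw hv hw => cycProd_apply_succ hk hmono (by omega) hvw hv hw) ?_ hm hmn hn
  · rintro v ⟨i, hi, hki⟩
    rw [cycProd_apply_of_eq hk hmono hi.1 hi.2 hki]
    exact hi.1
  · rintro v w hvw ⟨i, hi, hki⟩ ⟨j, hj, hkj⟩
    rw [Fin.lt_def, cycProd_apply_of_eq hk hmono hi.1 hi.2 hki,
      cycProd_apply_of_eq hk hmono hj.1 hj.2 hkj]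
    exact (hmono.lt_iff_lt hi hj).mp (by rw [Fin.lt_def] at hvw; omega)

/-- the trichotomy for `w = Π_2 ⋯ Π_a` and a string of consecutive
simple roots `α_m, …, α_n`:  (1) some `w(α_t)` is positive; or (2) `Π_a` sends
`α_m, …, α_n` to consecutive simple roots `α_c, …, α_{c+n-m}`; or (3) `w(α_m)` is
negative and `Π_a` sends `α_{m+1}, …, α_n` to consecutive simple roots. -/
theorem stmt13 (r a m n : ℕ) (hr : 1 ≤ r) (ha : 2 ≤ a) (c k : ℕ → ℕ)
    (hc : ∀ j, 1 ≤ j → j ≤ a → 1 ≤ c j) (hcsum : psum c a = r + 1)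
    (hka : ∀ i, psum c 1 ≤ i → i ≤ r → 1 ≤ k i ∧ k i ≤ i + 1)
    (hkb : ∀ j, 2 ≤ j → j ≤ a → ∀ i, psum c (j - 1) ≤ i → i + 1 ≤ psum c j - 1 →
      k i < k (i + 1))
    (hm : 1 ≤ m) (hmn : m ≤ n) (hn : n ≤ r) :
    (∃ t, m ≤ t ∧ t ≤ n ∧ posRoot r (tailProd r a c k 2) t) ∨
    (∃ cc, 1 ≤ cc ∧ ∀ s, s ≤ n - m → eqRoot r (tailProd r a c k a) (m + s) (cc + s)) ∨
    (negRoot r (tailProd r a c k 2) m ∧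
      ∃ cc, 1 ≤ cc ∧ ∀ s, m + 1 + s ≤ n →
        eqRoot r (tailProd r a c k a) (m + 1 + s) (cc + s)) :=
  stmt13_general r a m n ha c k hc hcsum hka hkb hm hmn hn
end
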